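/- arXiv:2603.19038 — 3 statements merged into one kernel-verified Lean document; each statement's English description precedes it below -/
import Mathlib

section
/- Let d ≥ 3 and let 0 < δ < 1. Let G be a d-regular graph on n vertices such that every vertex subset U with |U| ≤ log^{C+1} n satisfies e(U) ≤ (1+δ)|U|, where e(U) denotes the number of edges inside U. Then every vertex subset U with |U| ≤ log^C n satisfies |N_G(U)| ≥ (d/(1+δ) − 2)|U|. -/
/-- The external neighborhood of a vertex set `U`. -/
def SimpleGraph.extNbhd {V : Type*} (G : SimpleGraph V) (U : Set V) : Set V :=
  {v | v ∉ U ∧ ∃ u ∈ U, G.Adj u v}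

/-- The set of edges of `G` with both endpoints in `U`. -/
def SimpleGraph.edgesIn {V : Type*} (G : SimpleGraph V) (U : Set V) : Set (Sym2 V) :=
  {e | e ∈ G.edgeSet ∧ ∀ v ∈ e, v ∈ U}

/-!
Each dart leaving a vertex of `U` carries an edge of `U ∪ N(U)`, and an edge is carried twice
only if it lies inside `U`; hence `d |U| ≤ e(U ∪ N(U)) + e(U)`. If `|N(U)|` were smaller than
claimed, `U ∪ N(U)` would have at most `d |U| ≤ log^{C+1} n` vertices, so sparsity applies to it
and to `U`, giving `d |U| ≤ (1 + δ) (2 |U| + |N(U)|)`, which is the claim.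
-/

namespace SimpleGraph

variable {V : Type*} (G : SimpleGraph V)

lemma edgesIn_mono {U W : Set V} (h : U ⊆ W) : G.edgesIn U ⊆ G.edgesIn W :=
  fun _ he => ⟨he.1, fun v hv => h (he.2 v hv)⟩

lemma dart_edge_mem_edgesIn {U : Set V} {x : G.Dart} (h₁ : x.fst ∈ U) (h₂ : x.snd ∈ U) :
    x.edge ∈ G.edgesIn U := by
  refine ⟨x.edge_mem, fun v hv => ?_⟩
  rcases Sym2.mem_iff.mp hv with rfl | rfl <;> assumption

variable [Fintype V]

lemma ncard_darts_mem_notMem_le (U : Set V) :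
    {x : G.Dart | x.fst ∈ U ∧ x.snd ∉ U}.ncard ≤
      (G.edgesIn (U ∪ G.extNbhd U) \ G.edgesIn U).ncard := by
  refine Set.ncard_le_ncard_of_injOn Dart.edge (fun x hx => ⟨?_, ?_⟩) (fun x hx y hy hxy => ?_)
  · exact G.dart_edge_mem_edgesIn (Or.inl hx.1) (Or.inr ⟨hx.2, x.fst, hx.1, x.adj⟩)
  · exact fun h => hx.2 (h.2 _ (Sym2.mem_mk_right _ _))
  · rcases (dart_edge_eq_iff x y).mp hxy with h | rfl
    · exact h
    · exact absurd hx.1 hy.2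

variable [DecidableRel G.Adj]

variable {G} in
lemma IsRegularOfDegree.ncard_darts_fst_mem {d : ℕ} (hreg : G.IsRegularOfDegree d) (U : Set V) :
    {x : G.Dart | x.fst ∈ U}.ncard = d * U.ncard := by
  classical
  rw [Set.ncard_eq_toFinset_card', Set.ncard_eq_toFinset_card',
    Finset.card_eq_sum_card_fiberwise (f := fun x => x.fst) (t := U.toFinset) (by simp [Set.MapsTo]),
    Finset.sum_congr rfl fun u hu => ?_, Finset.sum_const, smul_eq_mul, mul_comm]
  rw [← hreg u, ← dart_fst_fiber_card_eq_degree]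
  congr 1
  ext x
  simp_all

lemma ncard_darts_mem_mem_le (U : Set V) :
    {x : G.Dart | x.fst ∈ U ∧ x.snd ∈ U}.ncard ≤ 2 * (G.edgesIn U).ncard := by
  classical
  set A := {x : G.Dart | x.fst ∈ U ∧ x.snd ∈ U}.toFinset
  have hfiber : ∀ e ∈ A.image Dart.edge, {x ∈ A | x.edge = e}.card ≤ 2 := by
    intro e he
    obtain ⟨x, -, rfl⟩ := Finset.mem_image.mp he
    rw [← G.dart_edge_fiber_card x.edge x.edge_mem]
    exact Finset.card_le_card fun y hy => by simp_all
  calc {x : G.Dart | x.fst ∈ U ∧ x.snd ∈ U}.ncard = A.card := Set.ncard_eq_toFinset_card' _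
    _ ≤ 2 * (A.image Dart.edge).card := Finset.card_le_mul_card_image _ _ hfiber
    _ ≤ 2 * (G.edgesIn U).ncard := by
      rw [← Set.ncard_coe_finset]
      gcongr
      · exact Set.toFinite _
      intro e he
      obtain ⟨x, hx, rfl⟩ := Finset.mem_image.mp he
      rw [Set.mem_toFinset] at hx
      exact G.dart_edge_mem_edgesIn hx.1 hx.2

variable {G} in
lemma IsRegularOfDegree.mul_ncard_le_ncard_edgesIn_add {d : ℕ} (hreg : G.IsRegularOfDegree d)
    (U : Set V) :
    d * U.ncard ≤ (G.edgesIn (U ∪ G.extNbhd U)).ncard + (G.edgesIn U).ncard := by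
  have hsplit : {x : G.Dart | x.fst ∈ U} =
      {x | x.fst ∈ U ∧ x.snd ∈ U} ∪ {x | x.fst ∈ U ∧ x.snd ∉ U} := by
    ext x; by_cases x.snd ∈ U <;> simp [*]
  have hdisj : Disjoint {x : G.Dart | x.fst ∈ U ∧ x.snd ∈ U} {x | x.fst ∈ U ∧ x.snd ∉ U} :=
    Set.disjoint_left.mpr fun _ hx hx' => hx'.2 hx.2
  have hsub : G.edgesIn U ⊆ G.edgesIn (U ∪ G.extNbhd U) := G.edgesIn_mono Set.subset_union_left
  have hle := Set.ncard_le_ncard hsub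
  rw [← hreg.ncard_darts_fst_mem, hsplit, Set.ncard_union_eq hdisj]
  have hinside := G.ncard_darts_mem_mem_le U
  have hleaving := G.ncard_darts_mem_notMem_le U
  rw [Set.ncard_sdiff hsub] at hleaving
  omega

end SimpleGraph

theorem stmt4_general {V : Type*} [Fintype V] (G : SimpleGraph V) [DecidableRel G.Adj]
    (n d : ℕ) (hreg : G.IsRegularOfDegree d) (δ C : ℝ) (hδ : 0 < δ)
    (hdlog : (d : ℝ) * (Real.log n) ^ C ≤ (Real.log n) ^ (C + 1))
    (hsparse : ∀ U : Set V, (U.ncard : ℝ) ≤ (Real.log n) ^ (C + 1) →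
      ((G.edgesIn U).ncard : ℝ) ≤ (1 + δ) * U.ncard) :
    ∀ U : Set V, (U.ncard : ℝ) ≤ (Real.log n) ^ C →
      ((d : ℝ) / (1 + δ) - 2) * U.ncard ≤ ((G.extNbhd U).ncard : ℝ) := by
  intro U hU
  set W := U ∪ G.extNbhd U
  have hδ' : 0 < 1 + δ := by linarith
  have hdiv : (d : ℝ) / (1 + δ) ≤ d := div_le_self d.cast_nonneg (by linarith)
  have hW : (W.ncard : ℝ) ≤ U.ncard + (G.extNbhd U).ncard := by
    exact_mod_cast Set.ncard_union_le _ _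
  have hUW : (U.ncard : ℝ) ≤ W.ncard := by exact_mod_cast Set.ncard_le_ncard Set.subset_union_left
  have hcount : (d * U.ncard : ℝ) ≤ (G.edgesIn W).ncard + (G.edgesIn U).ncard := by
    exact_mod_cast hreg.mul_ncard_le_ncard_edgesIn_add U
  by_contra! hsmall
  have hWsmall : (W.ncard : ℝ) ≤ (Real.log n) ^ (C + 1) := by
    calc (W.ncard : ℝ) ≤ d * U.ncard := by nlinarith
      _ ≤ d * (Real.log n) ^ C := by gcongr
      _ ≤ (Real.log n) ^ (C + 1) := hdlog
  have hsW := hsparse W hWsmall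
  have hsU := hsparse U (hUW.trans hWsmall)
  have hsparse_count : (d : ℝ) * U.ncard ≤ (1 + δ) * (2 * U.ncard + (G.extNbhd U).ncard) :=
    calc (d : ℝ) * U.ncard ≤ (G.edgesIn W).ncard + (G.edgesIn U).ncard := hcount
      _ ≤ (1 + δ) * W.ncard + (1 + δ) * U.ncard := add_le_add hsW hsU
      _ ≤ (1 + δ) * (2 * U.ncard + (G.extNbhd U).ncard) := by nlinarith
  have hexpansion : (d : ℝ) / (1 + δ) * U.ncard ≤ 2 * U.ncard + (G.extNbhd U).ncard := by
    rw [div_mul_eq_mul_div, div_le_iff₀ hδ']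
    linarith
  linarith

theorem stmt4 {V : Type*} [Fintype V] (G : SimpleGraph V) [DecidableRel G.Adj]
    (n d : ℕ) (hn : n = Fintype.card V) (hd : 3 ≤ d)
    (hreg : G.IsRegularOfDegree d) (δ C : ℝ) (hδ : 0 < δ) (hδ1 : δ < 1)
    (hdlog : (d : ℝ) * (Real.log n) ^ C ≤ (Real.log n) ^ (C + 1))
    (hsparse : ∀ U : Set V, (U.ncard : ℝ) ≤ (Real.log n) ^ (C + 1) →
      ((G.edgesIn U).ncard : ℝ) ≤ (1 + δ) * U.ncard) :
    ∀ U : Set V, (U.ncard : ℝ) ≤ (Real.log n) ^ C →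
      ((d : ℝ) / (1 + δ) - 2) * U.ncard ≤ ((G.extNbhd U).ncard : ℝ) :=
  stmt4_general G n d hreg δ C hδ hdlog hsparse
end

section
/- Let δ > 0 and let G be a d-regular graph (d ≥ 3) on n vertices in which every vertex subset U with |U| ≤ 3/(4δ) satisfies e(U) ≤ (1+δ)|U|. Then any two cycles in G each of length at most 1/(4δ) are at graph distance at least 1/(4δ) from each other. -/
lemma List.ncard_setOf_mem_le {α : Type*} (l : List α) : {x | x ∈ l}.ncard ≤ l.length := by
  classical
  rw [← List.coe_toFinset, Set.ncard_coe_finset]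
  exact l.toFinset_card_le

namespace SimpleGraph

variable {V : Type*} {G : SimpleGraph V}

lemma natCard_edgeSet_deleteEdges_singleton_add_one [Finite G.edgeSet] {e : Sym2 V}
    (he : e ∈ G.edgeSet) : Nat.card (G.deleteEdges {e}).edgeSet + 1 = Nat.card G.edgeSet := by
  rw [edgeSet_deleteEdges, Nat.card_coe_set_eq, Nat.card_coe_set_eq,
    Set.ncard_sdiff_singleton_add_one he (Set.toFinite _)]

lemma Connected.connected_deleteEdges_of_mem_edges_of_isCycle (hG : G.Connected) {u : V}
    {c : G.Walk u u} (hc : c.IsCycle) {e : Sym2 V} (he : e ∈ c.edges) :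
    (G.deleteEdges {e}).Connected := by
  induction e using Sym2.ind with
  | h x y =>
    exact hG.connected_delete_edge_of_not_isBridge fun hb ↦ hb.notMem_edges_of_isCycle hc he

lemma Connected.card_vert_le_card_edgeSet_of_isCycle [Finite V] (hG : G.Connected) {u : V}
    {c : G.Walk u u} (hc : c.IsCycle) : Nat.card V ≤ Nat.card G.edgeSet := by
  obtain ⟨e, he⟩ := List.exists_mem_of_ne_nil c.edges (by simpa using hc.not_nil)
  rw [← natCard_edgeSet_deleteEdges_singleton_add_one (c.edges_subset_edgeSet he)]
  exact (hG.connected_deleteEdges_of_mem_edges_of_isCycle hc he).card_vert_le_card_edgeSet_add_one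

lemma Connected.card_vert_add_one_le_card_edgeSet_of_isCycle [Finite V] (hG : G.Connected)
    {u w : V} {c₁ : G.Walk u u} {c₂ : G.Walk w w} (hc₁ : c₁.IsCycle) (hc₂ : c₂.IsCycle)
    {e : Sym2 V} (he₁ : e ∈ c₁.edges) (he₂ : e ∉ c₂.edges) :
    Nat.card V + 1 ≤ Nat.card G.edgeSet := by
  have hc₂' := Walk.IsCycle.toDeleteEdges G {e} hc₂ fun _ h h' ↦
    he₂ (Set.mem_singleton_iff.mp h' ▸ h)
  rw [← natCard_edgeSet_deleteEdges_singleton_add_one (c₁.edges_subset_edgeSet he₁)]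
  exact Nat.add_le_add_right ((hG.connected_deleteEdges_of_mem_edges_of_isCycle hc₁ he₁)
    |>.card_vert_le_card_edgeSet_of_isCycle hc₂') 1

lemma edgesIn_eq_image_edgeSet_induce (U : Set V) :
    G.edgesIn U = Sym2.map (↑) '' (G.induce U).edgeSet := by
  ext e
  induction e using Sym2.ind with
  | h x y =>
    constructor
    · rintro ⟨hxy, hU⟩
      exact ⟨s(⟨x, hU x (Sym2.mem_mk_left x y)⟩, ⟨y, hU y (Sym2.mem_mk_right x y)⟩), hxy, rfl⟩
    · rintro ⟨e, he, hxy⟩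
      rw [← hxy]
      induction e using Sym2.ind with
      | h a b => exact ⟨he, by simp⟩

lemma ncard_edgesIn (U : Set V) : (G.edgesIn U).ncard = Nat.card (G.induce U).edgeSet := by
  rw [edgesIn_eq_image_edgeSet_induce, Set.ncard_image_of_injective _
    (Sym2.map.injective Subtype.val_injective), Nat.card_coe_set_eq]

namespace Walk

variable {u v : V}

lemma map_edges_induce {s : Set V} (p : G.Walk u v) (hs : ∀ x ∈ p.support, x ∈ s) :
    (p.induce s hs).edges.map (Sym2.map (↑)) = p.edges := by
  have h := congrArg (·.edges) (p.map_induce hs)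
  rwa [edges_map] at h

lemma IsCycle.induce {s : Set V} {c : G.Walk u u} (hc : c.IsCycle) (hs : ∀ x ∈ c.support, x ∈ s) :
    (c.induce s hs).IsCycle := by
  rw [← isCycle_map_iff_of_injective (f := (Embedding.induce s).toHom) Subtype.val_injective,
    map_induce]
  exact hc

lemma mem_support_tail_iff_of_not_nil {c : G.Walk u u} (hc : ¬c.Nil) :
    v ∈ c.support.tail ↔ v ∈ c.support := by
  rw [← c.cons_tail_support, List.mem_cons]
  grind [c.end_mem_tail_support hc]

lemma ncard_support_union_le {u x y w : V} {c₁ : G.Walk u u} {c₂ : G.Walk w w} (hc₁ : ¬c₁.Nil)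
    (hc₂ : ¬c₂.Nil) (p : G.Walk x y) (hx : x ∈ c₁.support) :
    ({v | v ∈ c₁.support} ∪ {v | v ∈ p.support} ∪ {v | v ∈ c₂.support}).ncard ≤
      c₁.length + p.length + c₂.length := by
  calc _ ≤ {v | v ∈ c₁.support.tail ++ p.support.tail ++ c₂.support.tail}.ncard := by
        refine Set.ncard_le_ncard ?_ (List.finite_toSet _)
        rintro v ((hv | hv) | hv) <;> simp only [Set.mem_ofPred_eq, List.mem_append] at hv ⊢
        · exact .inl (.inl ((mem_support_tail_iff_of_not_nil hc₁).2 hv))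
        · rw [← p.cons_tail_support, List.mem_cons] at hv
          rcases hv with rfl | hv
          · exact .inl (.inl ((mem_support_tail_iff_of_not_nil hc₁).2 hx))
          · exact .inl (.inr hv)
        · exact .inr ((mem_support_tail_iff_of_not_nil hc₂).2 hv)
    _ ≤ _ := (List.ncard_setOf_mem_le _).trans (by simp [add_assoc])

end Walk

lemma add_one_le_ncard_edgesIn_of_isCycle {U : Set V} (hU : U.Finite)
    (hconn : (G.induce U).Connected) {u w : V} {c₁ : G.Walk u u} {c₂ : G.Walk w w}
    (hc₁ : c₁.IsCycle) (hc₂ : c₂.IsCycle) (hs₁ : ∀ x ∈ c₁.support, x ∈ U)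
    (hs₂ : ∀ x ∈ c₂.support, x ∈ U) (hne : {e | e ∈ c₁.edges} ≠ {e | e ∈ c₂.edges}) :
    U.ncard + 1 ≤ (G.edgesIn U).ncard := by
  wlog h : ∃ e ∈ c₁.edges, e ∉ c₂.edges generalizing u w c₁ c₂
  · refine this hc₂ hc₁ hs₂ hs₁ hne.symm ?_
    by_contra! h'
    exact hne (Set.ext fun e ↦ ⟨fun he ↦ by_contra fun he' ↦ h ⟨e, he, he'⟩, h' e⟩)
  obtain ⟨e, he₁, he₂⟩ := h
  have : Finite U := hU.to_subtype
  rw [← Walk.map_edges_induce c₁ hs₁, List.mem_map] at he₁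
  obtain ⟨e', he'₁, rfl⟩ := he₁
  have he'₂ : e' ∉ (c₂.induce U hs₂).edges := fun h ↦
    he₂ (Walk.map_edges_induce c₂ hs₂ ▸ List.mem_map_of_mem h)
  rw [ncard_edgesIn, ← Nat.card_coe_set_eq]
  exact hconn.card_vert_add_one_le_card_edgeSet_of_isCycle (hc₁.induce hs₁) (hc₂.induce hs₂)
    he'₁ he'₂

end SimpleGraph

open SimpleGraph in
theorem stmt6_general {V : Type*} (G : SimpleGraph V)
    (δ : ℝ) (hδ0 : 0 < δ)
    (hsparse : ∀ U : Set V, (U.ncard : ℝ) ≤ 3 / (4 * δ) →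
      ((G.edgesIn U).ncard : ℝ) ≤ (1 + δ) * U.ncard)
    {u w : V} (c₁ : G.Walk u u) (c₂ : G.Walk w w)
    (h₁ : c₁.IsCycle) (h₂ : c₂.IsCycle)
    (hl₁ : (c₁.length : ℝ) ≤ 1 / (4 * δ)) (hl₂ : (c₂.length : ℝ) ≤ 1 / (4 * δ))
    (hne : {e | e ∈ c₁.edges} ≠ {e | e ∈ c₂.edges}) :
    ∀ x ∈ c₁.support, ∀ y ∈ c₂.support, ∀ p : G.Walk x y,
      1 / (4 * δ) ≤ (p.length : ℝ) := by
  intro x hx y hy p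
  by_contra! hp
  set U := {v | v ∈ c₁.support} ∪ {v | v ∈ p.support} ∪ {v | v ∈ c₂.support}
  have hUcard : (U.ncard : ℝ) ≤ 3 / (4 * δ) := by
    have hU : (U.ncard : ℝ) ≤ c₁.length + p.length + c₂.length := by
      exact_mod_cast Walk.ncard_support_union_le h₁.not_nil h₂.not_nil p hx
    linarith [show 3 / (4 * δ) = 3 * (1 / (4 * δ)) by ring]
  have hconn : (G.induce U).Connected :=
    induce_union_connected (induce_union_connected c₁.connected_induce_support.preconnected
        p.connected_induce_support.preconnected ⟨x, hx, p.start_mem_support⟩).preconnected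
      c₂.connected_induce_support.preconnected ⟨y, .inr p.end_mem_support, hy⟩
  have hedges : (U.ncard : ℝ) + 1 ≤ (G.edgesIn U).ncard := by
    exact_mod_cast add_one_le_ncard_edgesIn_of_isCycle
      (((List.finite_toSet _).union (List.finite_toSet _)).union (List.finite_toSet _))
      hconn h₁ h₂ (fun _ hv ↦ .inl (.inl hv)) (fun _ hv ↦ .inr hv) hne
  have hδU : δ * U.ncard ≤ 3 / 4 :=
    calc δ * U.ncard ≤ δ * (3 / (4 * δ)) := by gcongr
      _ = 3 / 4 := by field_simp
  linarith [hsparse U hUcard]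

theorem stmt6 {V : Type*} [Fintype V] (G : SimpleGraph V) [DecidableRel G.Adj]
    (d : ℕ) (hd : 3 ≤ d) (hreg : G.IsRegularOfDegree d) (δ : ℝ) (hδ0 : 0 < δ) (hδ1 : δ < 1)
    (hsparse : ∀ U : Set V, (U.ncard : ℝ) ≤ 3 / (4 * δ) →
      ((G.edgesIn U).ncard : ℝ) ≤ (1 + δ) * U.ncard)
    {u w : V} (c₁ : G.Walk u u) (c₂ : G.Walk w w)
    (h₁ : c₁.IsCycle) (h₂ : c₂.IsCycle)
    (hl₁ : (c₁.length : ℝ) ≤ 1 / (4 * δ)) (hl₂ : (c₂.length : ℝ) ≤ 1 / (4 * δ))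
    (hne : {e | e ∈ c₁.edges} ≠ {e | e ∈ c₂.edges}) :
    ∀ x ∈ c₁.support, ∀ y ∈ c₂.support, ∀ p : G.Walk x y,
      1 / (4 * δ) ≤ (p.length : ℝ) :=
  stmt6_general G δ hδ0 hsparse c₁ c₂ h₁ h₂ hl₁ hl₂ hne
end

section
/- Let G be a d-regular graph on n vertices satisfying: for every U ⊆ V with |U| ≤ n/2, e(U, Uᶜ) ≥ c₁|U|; and suppose every vertex of G is within distance L of a set W. Then for every partition of W into two parts A, B (each a union of components of some subgraph), with a = |A| ≤ |B|, there exist at least c₁·a / d^{2L+1} vertex-disjoint paths in G of length at most 2L+1 between A and B (disjoint outside of A and B). -/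
/-! Choose the paths greedily. Suppose fewer than `c₁ a / d ^ (2L+1)` paths have been chosen and let
`X` be the set of their internal vertices, so `|X| ≤ 2L · #paths`. Let `R_A` (resp. `R_B`) be the
vertices joined to `A` (resp. `B`) by a walk of length `≤ L` avoiding `X`. If `R_A` and `R_B` meet
or are adjacent, this yields a new `A`–`B` walk of length `≤ 2L+1` avoiding `X`. Otherwise, since
every vertex is within `L` of `A ∪ B`, every vertex outside `R_A ∪ R_B` lies within `L - 1` of `X`,
a set `Z` of at most `|X| (1 + d + ⋯ + d^(L-1))` vertices. The smaller of `R_A`, `R_B` has at least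
`a` and at most `n/2` vertices and all its boundary edges end in `Z`, so expansion gives
`c₁ a ≤ d |Z|`, which the bound on `|X|` rules out. -/

/-- The set of edges of `G` with one endpoint in `U` and one endpoint in `W`. -/
def SimpleGraph.edgesBetween {V : Type*} (G : SimpleGraph V) (U W : Set V) : Set (Sym2 V) :=
  {e | e ∈ G.edgeSet ∧ ∃ x ∈ U, ∃ y ∈ W, e = s(x, y)}

open Finset

lemma Set.two_mul_ncard_le_card_of_disjoint {α : Type*} [Fintype α] {S T : Set α}
    (hST : Disjoint S T) (hle : S.ncard ≤ T.ncard) : 2 * S.ncard ≤ Fintype.card α := by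
  have := Set.ncard_union_eq hST
  have := (S ∪ T).ncard_le_card
  rw [Nat.card_eq_fintype_card] at this
  omega

lemma mul_geomSum_mul_le_pow {d : ℕ} (hd : 2 ≤ d) (L : ℕ) :
    d * (∑ i ∈ range L, d ^ i) * (2 * L) ≤ d ^ (2 * L + 1) := by
  have hsum : ∑ i ∈ range L, d ^ i ≤ d ^ L := (Nat.geomSum_lt hd fun _ => mem_range.mp).le
  have hL : 2 * L ≤ d ^ L := (Nat.mul_le_pow (by norm_num) L).trans (Nat.pow_le_pow_left hd L)
  calc _ ≤ d * d ^ L * d ^ L := by gcongr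
    _ = d ^ (2 * L + 1) := by ring

/-- For `d = 0` the quotient is `0` by convention. For `d = 1` the bound
`mul_geomSum_mul_le_pow` fails, and `x ≤ 1` ensures that at most one path is asked for. -/
lemma exists_nat_div_pow_le_and_forall_lt {d : ℕ} (L : ℕ) {x : ℝ} (hd : d = 1 → x ≤ 1) :
    ∃ K : ℕ, x / d ^ (2 * L + 1) ≤ K ∧
      ∀ k < K, ((d * (∑ i ∈ range L, d ^ i) * (2 * L * k) : ℕ) : ℝ) < x := by
  refine ⟨⌈x / d ^ (2 * L + 1)⌉₊, Nat.le_ceil _, fun k hk => ?_⟩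
  have hkx : (k : ℝ) < x / d ^ (2 * L + 1) := Nat.lt_ceil.mp hk
  rcases Nat.eq_zero_or_pos k with rfl | hk0
  · have hx : 0 < x := by
      by_contra! hx
      exact hkx.not_ge (by simpa using div_nonpos_of_nonpos_of_nonneg hx (by positivity))
    simpa using hx
  have hd2 : 2 ≤ d := by
    by_contra! hd2
    interval_cases d
    · norm_num at hkx
      exact (Nat.cast_nonneg k).not_gt hkx
    · have hx1 := hd rfl
      have hk1 : (1 : ℝ) ≤ k := by exact_mod_cast hk0
      rw [Nat.cast_one, one_pow, div_one] at hkx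
      linarith
  rw [lt_div_iff₀ (by positivity)] at hkx
  calc ((d * (∑ i ∈ range L, d ^ i) * (2 * L * k) : ℕ) : ℝ)
      = ((d * (∑ i ∈ range L, d ^ i) * (2 * L) : ℕ) : ℝ) * k := by push_cast; ring
    _ ≤ ((d ^ (2 * L + 1) : ℕ) : ℝ) * k := by gcongr; exact mul_geomSum_mul_le_pow hd2 L
    _ < x := by push_cast; linarith

namespace SimpleGraph

variable {V : Type*} (G : SimpleGraph V)

def IsEdgeExpander [Fintype V] (c : ℝ) : Prop :=
  ∀ U : Set V, (U.ncard : ℝ) ≤ Fintype.card V / 2 → c * U.ncard ≤ (G.edgesBetween U Uᶜ).ncard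

def reachAvoiding (X : Set V) (L : ℕ) (A : Set V) : Set V :=
  {v | ∃ a ∈ A, ∃ p : G.Walk v a, p.length ≤ L ∧ ∀ x ∈ p.support, x ∉ X}

def IsLinkage (A B : Set V) (ℓ : ℕ) (l : List (Σ u v, G.Walk u v)) : Prop :=
  (∀ P ∈ l, P.1 ∈ A ∧ P.2.1 ∈ B ∧ P.2.2.length ≤ ℓ ∧ P.2.2.IsPath) ∧
    l.Pairwise fun P Q => ∀ x ∈ P.2.2.support, x ∈ Q.2.2.support → x ∈ A ∪ B

variable {G} {A B X : Set V} {L ℓ : ℕ}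

def internalVerts (S : Set V) (l : List (Σ u v, G.Walk u v)) : Set V :=
  {x | x ∉ S ∧ ∃ P ∈ l, x ∈ P.2.2.support}

lemma subset_reachAvoiding (hX : Disjoint X A) : A ⊆ G.reachAvoiding X L A := fun a ha =>
  ⟨a, ha, .nil, Nat.zero_le L, fun x hx hxX => by
    rw [Walk.support_nil, List.mem_singleton] at hx
    exact Set.disjoint_left.mp hX hxX (hx ▸ ha)⟩

lemma mem_reachAvoiding_or_exists_walk_length_lt
    (hclose : ∀ v, ∃ w ∈ A ∪ B, ∃ p : G.Walk v w, p.length ≤ L) (hX : Disjoint X (A ∪ B))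
    (v : V) :
    v ∈ G.reachAvoiding X L A ∨ v ∈ G.reachAvoiding X L B ∨
      ∃ x ∈ X, ∃ p : G.Walk v x, p.length < L := by
  classical
  obtain ⟨w, hw, p, hp⟩ := hclose v
  by_cases hpX : ∀ x ∈ p.support, x ∉ X
  · rcases hw with hw | hw
    · exact Or.inl ⟨w, hw, p, hp, hpX⟩
    · exact Or.inr (Or.inl ⟨w, hw, p, hp, hpX⟩)
  · push Not at hpX
    obtain ⟨x, hx, hxX⟩ := hpX
    have hxw : x ≠ w := fun h => Set.disjoint_left.mp hX hxX (h ▸ hw)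
    exact Or.inr (Or.inr ⟨x, hxX, p.takeUntil x hx,
      (Walk.length_takeUntil_lt_length hx hxw).trans_le hp⟩)

lemma exists_walk_avoiding_of_mem_reachAvoiding {u w : V} (hu : u ∈ G.reachAvoiding X L A)
    (hw : w ∈ G.reachAvoiding X L B) (huw : u = w ∨ G.Adj u w) :
    ∃ a ∈ A, ∃ b ∈ B, ∃ p : G.Walk a b, p.length ≤ 2 * L + 1 ∧ ∀ x ∈ p.support, x ∉ X := by
  obtain ⟨a, ha, p, hp, hpX⟩ := hu
  obtain ⟨b, hb, q, hq, hqX⟩ := hw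
  obtain ⟨r, hr, hrs⟩ : ∃ r : G.Walk u w, r.length ≤ 1 ∧ ∀ x ∈ r.support, x = u ∨ x = w := by
    rcases huw with rfl | h
    · exact ⟨.nil, by simp, by simp⟩
    · exact ⟨h.toWalk, by simp, by simp⟩
  refine ⟨a, ha, b, hb, p.reverse.append (r.append q), ?_, fun x hx => ?_⟩
  · simp only [Walk.length_append, Walk.length_reverse]
    omega
  simp only [Walk.mem_support_append_iff, Walk.support_reverse, List.mem_reverse] at hx
  rcases hx with hx | hx | hx
  · exact hpX x hx
  · rcases hrs x hx with rfl | rfl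
    · exact hpX x p.start_mem_support
    · exact hqX x q.start_mem_support
  · exact hqX x hx

lemma ncard_support_diff_add_one_le {u v : V} (p : G.Walk u v) {S : Set V} (hu : u ∈ S)
    (hv : v ∈ S) (huv : u ≠ v) : ({x | x ∈ p.support} \ S).ncard + 1 ≤ p.length := by
  classical
  have hfin : {x | x ∈ p.support}.Finite := p.support.finite_toSet
  have hends : ({u, v} : Set V) ⊆ {x | x ∈ p.support} := by
    rintro x (rfl | rfl)
    exacts [p.start_mem_support, p.end_mem_support]
  have hsupp : {x | x ∈ p.support}.ncard ≤ p.length + 1 := by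
    rw [← p.length_support, ← List.coe_toFinset, Set.ncard_coe_finset]
    exact p.support.toFinset_card_le
  have hdiff : ({x | x ∈ p.support} \ S).ncard ≤ ({x | x ∈ p.support} \ {u, v}).ncard :=
    Set.ncard_le_ncard (Set.sdiff_subset_sdiff_right (Set.insert_subset hu (by simpa using hv)))
      hfin.sdiff
  rw [Set.ncard_sdiff' hends hfin, Set.ncard_pair huv] at hdiff
  have hends_card := Set.ncard_le_ncard hends hfin
  rw [Set.ncard_pair huv] at hends_card
  omega

lemma IsLinkage.cons {l : List (Σ u v, G.Walk u v)}
    (hl : G.IsLinkage A B ℓ l) {a b : V} {p : G.Walk a b} (ha : a ∈ A) (hb : b ∈ B)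
    (hp : p.length ≤ ℓ) (hpath : p.IsPath) (hpX : ∀ x ∈ p.support, x ∉ internalVerts (A ∪ B) l) :
    G.IsLinkage A B ℓ (⟨a, b, p⟩ :: l) :=
  ⟨List.forall_mem_cons.mpr ⟨⟨ha, hb, hp, hpath⟩, hl.1⟩,
    List.pairwise_cons.mpr ⟨fun Q hQ x hx hxQ => by_contra fun hxAB => hpX x hx ⟨hxAB, Q, hQ, hxQ⟩,
      hl.2⟩⟩

lemma IsLinkage.get {l : List (Σ u v, G.Walk u v)}
    (hl : G.IsLinkage A B ℓ l) :
    (∀ i, (l.get i).1 ∈ A) ∧ (∀ i, (l.get i).2.1 ∈ B) ∧ (∀ i, (l.get i).2.2.length ≤ ℓ) ∧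
      (∀ i, (l.get i).2.2.IsPath) ∧
      (∀ i j, i ≠ j → ∀ x, x ∈ (l.get i).2.2.support → x ∈ (l.get j).2.2.support →
        x ∈ A ∪ B) := by
  have h i := hl.1 _ (l.get_mem i)
  refine ⟨fun i => (h i).1, fun i => (h i).2.1, fun i => (h i).2.2.1, fun i => (h i).2.2.2, ?_⟩
  intro i j hij x hi hj
  rcases hij.lt_or_gt with hlt | hlt
  · exact hl.2.rel_get_of_lt hlt x hi hj
  · exact hl.2.rel_get_of_lt hlt x hj hi

variable [Fintype V]

lemma ncard_internalVerts_le (hAB : Disjoint A B) {l : List (Σ u v, G.Walk u v)}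
    (hl : ∀ P ∈ l, P.1 ∈ A ∧ P.2.1 ∈ B ∧ P.2.2.length ≤ ℓ + 1) :
    (internalVerts (A ∪ B) l).ncard ≤ ℓ * l.length := by
  induction l with
  | nil => simp [internalVerts]
  | cons P l ih =>
    obtain ⟨hP, hl⟩ := List.forall_mem_cons.mp hl
    have hsub : internalVerts (A ∪ B) (P :: l) ⊆
        ({x | x ∈ P.2.2.support} \ (A ∪ B)) ∪ internalVerts (A ∪ B) l := by
      rintro x ⟨hx, Q, hQ, hxQ⟩
      rcases List.mem_cons.mp hQ with rfl | hQ
      exacts [Or.inl ⟨hxQ, hx⟩, Or.inr ⟨hx, Q, hQ, hxQ⟩]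
    have hne : P.1 ≠ P.2.1 := fun h => Set.disjoint_left.mp hAB hP.1 (h ▸ hP.2.1)
    have hPcard := ncard_support_diff_add_one_le P.2.2 (S := A ∪ B) (Or.inl hP.1) (Or.inr hP.2.1) hne
    have hlcard := ih hl
    calc (internalVerts (A ∪ B) (P :: l)).ncard
        ≤ ({x | x ∈ P.2.2.support} \ (A ∪ B)).ncard + (internalVerts (A ∪ B) l).ncard :=
          (Set.ncard_le_ncard hsub).trans (Set.ncard_union_le _ _)
      _ ≤ ℓ + ℓ * l.length := by omega
      _ = ℓ * (P :: l).length := by rw [List.length_cons]; ring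

variable [DecidableRel G.Adj] {d : ℕ} {c₁ : ℝ}

lemma ncard_edgesBetween_le (hdeg : ∀ v, G.degree v ≤ d) {S T Z : Set V}
    (hZ : ∀ x ∈ S, ∀ y ∈ T, G.Adj x y → x ∈ Z ∨ y ∈ Z) :
    (G.edgesBetween S T).ncard ≤ d * Z.ncard := by
  classical
  have hsub : G.edgesBetween S T ⊆ ⋃ z ∈ Z.toFinset, G.incidenceSet z := by
    rintro _ ⟨he, x, hx, y, hy, rfl⟩
    simp only [Set.mem_iUnion, Set.mem_toFinset, exists_prop]
    rcases hZ x hx y hy he with hxZ | hyZ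
    · exact ⟨x, hxZ, he, Sym2.mem_mk_left x y⟩
    · exact ⟨y, hyZ, he, Sym2.mem_mk_right x y⟩
  calc (G.edgesBetween S T).ncard ≤ (⋃ z ∈ Z.toFinset, G.incidenceSet z).ncard :=
        Set.ncard_le_ncard hsub
    _ ≤ ∑ z ∈ Z.toFinset, (G.incidenceSet z).ncard := Z.toFinset.set_ncard_biUnion_le _
    _ ≤ ∑ _z ∈ Z.toFinset, d := sum_le_sum fun z _ => by
        rw [Set.ncard_eq_toFinset_card', Set.toFinset_card, card_incidenceSet_eq_degree]
        exact hdeg z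
    _ = d * Z.ncard := by rw [sum_const, smul_eq_mul, Set.ncard_eq_toFinset_card', mul_comm]

lemma ncard_setOf_walk_length_eq_le (hdeg : ∀ v, G.degree v ≤ d) (x : V) (i : ℕ) :
    {v | ∃ p : G.Walk v x, p.length = i}.ncard ≤ d ^ i := by
  classical
  induction i with
  | zero =>
    have hsub : {v | ∃ p : G.Walk v x, p.length = 0} ⊆ {x} := by
      rintro v ⟨p, hp⟩
      exact Walk.eq_of_length_eq_zero hp
    exact (Set.ncard_le_ncard hsub).trans_eq (Set.ncard_singleton x)
  | succ i ih =>
    set S := {v | ∃ p : G.Walk v x, p.length = i}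
    have hsub : {v | ∃ p : G.Walk v x, p.length = i + 1} ⊆ ⋃ u ∈ S.toFinset, G.neighborSet u := by
      rintro v ⟨_ | ⟨h, q⟩, hp⟩
      · simp at hp
      · simp only [Set.mem_iUnion, Set.mem_toFinset, exists_prop]
        exact ⟨_, ⟨q, by simpa using hp⟩, h.symm⟩
    calc _ ≤ (⋃ u ∈ S.toFinset, G.neighborSet u).ncard := Set.ncard_le_ncard hsub
      _ ≤ ∑ u ∈ S.toFinset, (G.neighborSet u).ncard := S.toFinset.set_ncard_biUnion_le _
      _ ≤ ∑ _u ∈ S.toFinset, d := sum_le_sum fun u _ => by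
          rw [Set.ncard_eq_toFinset_card', Set.toFinset_card, card_neighborSet_eq_degree]
          exact hdeg u
      _ = S.ncard * d := by rw [sum_const, smul_eq_mul, Set.ncard_eq_toFinset_card']
      _ ≤ d ^ (i + 1) := by rw [pow_succ]; exact Nat.mul_le_mul_right d ih

lemma ncard_setOf_walk_length_lt_le (hdeg : ∀ v, G.degree v ≤ d) (X : Set V) (L : ℕ) :
    {v | ∃ x ∈ X, ∃ p : G.Walk v x, p.length < L}.ncard ≤ X.ncard * ∑ i ∈ range L, d ^ i := by
  classical
  have hsub : {v | ∃ x ∈ X, ∃ p : G.Walk v x, p.length < L} ⊆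
      ⋃ x ∈ X.toFinset, ⋃ i ∈ range L, {v | ∃ p : G.Walk v x, p.length = i} := by
    rintro v ⟨x, hx, p, hp⟩
    simp only [Set.mem_iUnion, Set.mem_toFinset, mem_range, exists_prop]
    exact ⟨x, hx, _, hp, p, rfl⟩
  calc _ ≤ _ := Set.ncard_le_ncard hsub
    _ ≤ ∑ x ∈ X.toFinset, (⋃ i ∈ range L, {v | ∃ p : G.Walk v x, p.length = i}).ncard :=
        X.toFinset.set_ncard_biUnion_le _
    _ ≤ ∑ x ∈ X.toFinset, ∑ i ∈ range L, {v | ∃ p : G.Walk v x, p.length = i}.ncard :=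
        sum_le_sum fun x _ => (range L).set_ncard_biUnion_le _
    _ ≤ ∑ _x ∈ X.toFinset, ∑ i ∈ range L, d ^ i :=
        sum_le_sum fun x _ => sum_le_sum fun i _ => ncard_setOf_walk_length_eq_le hdeg x i
    _ = X.ncard * ∑ i ∈ range L, d ^ i := by
        rw [sum_const, smul_eq_mul, Set.ncard_eq_toFinset_card']

lemma IsEdgeExpander.mul_min_ncard_le (hexp : G.IsEdgeExpander c₁)
    (hdeg : ∀ v, G.degree v ≤ d) {S T Z : Set V} (hST : Disjoint S T)
    (hadj : ∀ x ∈ S, ∀ y ∈ T, ¬ G.Adj x y) (hcover : ∀ v, v ∈ S ∨ v ∈ T ∨ v ∈ Z) :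
    c₁ * (min S.ncard T.ncard : ℕ) ≤ (d * Z.ncard : ℕ) := by
  wlog hle : S.ncard ≤ T.ncard generalizing S T
  · rw [min_comm]
    refine this hST.symm (fun y hy x hx h => hadj x hx y hy h.symm) (fun v => ?_) (by omega)
    rcases hcover v with h | h | h <;> simp [h]
  rw [min_eq_left hle]
  have hhalf : (S.ncard : ℝ) ≤ Fintype.card V / 2 := by
    have := Set.two_mul_ncard_le_card_of_disjoint hST hle
    rw [le_div_iff₀ two_pos]
    exact_mod_cast (mul_comm _ _).trans_le this
  calc c₁ * S.ncard ≤ (G.edgesBetween S Sᶜ).ncard := hexp S hhalf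
    _ ≤ (d * Z.ncard : ℕ) := by
      refine Nat.cast_le.mpr (ncard_edgesBetween_le hdeg fun x hx y hy hxy => Or.inr ?_)
      exact ((hcover y).resolve_left hy).resolve_left (hadj x hx y · hxy)

lemma IsEdgeExpander.card_lt_four_of_isRegularOfDegree_one (hexp : G.IsEdgeExpander c₁)
    (hc₁ : 0 < c₁) (hreg : G.IsRegularOfDegree 1) : Fintype.card V < 4 := by
  by_contra! h4
  have huniq : ∀ u w w', G.Adj u w → G.Adj u w' → w = w' := fun u w w' h h' =>
    card_le_one.mp (hreg u).le w ((mem_neighborFinset _ _ _).mpr h) w'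
      ((mem_neighborFinset _ _ _).mpr h')
  obtain ⟨x⟩ : Nonempty V := Fintype.card_pos_iff.mp (by omega)
  obtain ⟨y, hxy⟩ := (G.degree_pos_iff_exists_adj x).mp (hreg x ▸ one_pos)
  have hclosed : (G.edgesBetween {x, y} {x, y}ᶜ).ncard ≤ 1 * (∅ : Set V).ncard := by
    refine ncard_edgesBetween_le (fun v => (hreg v).le) ?_
    rintro u (rfl | rfl) w hw huw
    · exact absurd (Or.inr (huniq _ _ _ huw hxy)) hw
    · exact absurd (Or.inl (huniq _ _ _ huw hxy.symm)) hw
  have hpair := hexp {x, y} (by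
    rw [Set.ncard_pair hxy.ne, le_div_iff₀ two_pos]
    exact_mod_cast (by omega : 2 * 2 ≤ Fintype.card V))
  rw [Set.ncard_pair hxy.ne, Nat.cast_two] at hpair
  have hzero : ((G.edgesBetween {x, y} {x, y}ᶜ).ncard : ℝ) ≤ 0 := by
    exact_mod_cast hclosed.trans_eq (by simp)
  linarith

lemma IsEdgeExpander.mul_ncard_le_one_of_isRegularOfDegree_one (hexp : G.IsEdgeExpander c₁)
    (hc₁ : 0 < c₁) (hreg : G.IsRegularOfDegree 1) (hAB : Disjoint A B)
    (hle : A.ncard ≤ B.ncard) : c₁ * A.ncard ≤ 1 := by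
  have hA := Set.two_mul_ncard_le_card_of_disjoint hAB hle
  have hA1 : A.ncard ≤ 1 := by
    have := hexp.card_lt_four_of_isRegularOfDegree_one hc₁ hreg
    omega
  calc c₁ * A.ncard ≤ (G.edgesBetween A Aᶜ).ncard := hexp A (by
        rw [le_div_iff₀ two_pos]
        exact_mod_cast (mul_comm _ _).trans_le hA)
    _ ≤ (1 * A.ncard : ℕ) :=
        Nat.cast_le.mpr (ncard_edgesBetween_le (fun v => (hreg v).le) fun x hx _ _ _ => Or.inl hx)
    _ ≤ 1 := by simpa using hA1

theorem IsEdgeExpander.exists_walk_avoiding (hexp : G.IsEdgeExpander c₁)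
    (hdeg : ∀ v, G.degree v ≤ d) (hclose : ∀ v, ∃ w ∈ A ∪ B, ∃ p : G.Walk v w, p.length ≤ L)
    (hle : A.ncard ≤ B.ncard) (hX : Disjoint X (A ∪ B))
    (hsmall : ((d * (∑ i ∈ range L, d ^ i) * X.ncard : ℕ) : ℝ) < c₁ * A.ncard) :
    ∃ a ∈ A, ∃ b ∈ B, ∃ p : G.Walk a b, p.length ≤ 2 * L + 1 ∧ ∀ x ∈ p.support, x ∉ X := by
  by_contra hnone
  have hdisj : Disjoint (G.reachAvoiding X L A) (G.reachAvoiding X L B) :=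
    Set.disjoint_left.mpr fun v hA hB =>
      hnone (exists_walk_avoiding_of_mem_reachAvoiding hA hB (Or.inl rfl))
  have hnadj : ∀ u ∈ G.reachAvoiding X L A, ∀ w ∈ G.reachAvoiding X L B, ¬ G.Adj u w :=
    fun u hu w hw h => hnone (exists_walk_avoiding_of_mem_reachAvoiding hu hw (Or.inr h))
  have hmin : A.ncard ≤ min (G.reachAvoiding X L A).ncard (G.reachAvoiding X L B).ncard :=
    le_min (Set.ncard_le_ncard (subset_reachAvoiding (hX.mono_right Set.subset_union_left)))
      (hle.trans (Set.ncard_le_ncard (subset_reachAvoiding (hX.mono_right Set.subset_union_right))))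
  have hexpand := hexp.mul_min_ncard_le hdeg hdisj hnadj
    (Z := {v | ∃ x ∈ X, ∃ p : G.Walk v x, p.length < L})
    (mem_reachAvoiding_or_exists_walk_length_lt hclose hX)
  have hZ := ncard_setOf_walk_length_lt_le hdeg X L
  have hc₁ : 0 ≤ c₁ := by
    by_contra! h
    exact (mul_nonpos_of_nonpos_of_nonneg h.le (Nat.cast_nonneg _)).not_gt
      ((Nat.cast_nonneg _).trans_lt hsmall)
  refine hsmall.not_ge ?_
  calc c₁ * A.ncard ≤ c₁ * (min _ _ : ℕ) := mul_le_mul_of_nonneg_left (by exact_mod_cast hmin) hc₁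
    _ ≤ (d * _ : ℕ) := hexpand
    _ ≤ ((d * (∑ i ∈ range L, d ^ i) * X.ncard : ℕ) : ℝ) := by
      rw [mul_assoc, mul_comm (∑ i ∈ range L, d ^ i)]
      exact_mod_cast Nat.mul_le_mul_left d hZ

theorem IsEdgeExpander.exists_isLinkage (hexp : G.IsEdgeExpander c₁)
    (hdeg : ∀ v, G.degree v ≤ d) (hclose : ∀ v, ∃ w ∈ A ∪ B, ∃ p : G.Walk v w, p.length ≤ L)
    (hAB : Disjoint A B) (hle : A.ncard ≤ B.ncard) (m : ℕ)
    (hm : ∀ k < m, ((d * (∑ i ∈ range L, d ^ i) * (2 * L * k) : ℕ) : ℝ) < c₁ * A.ncard) :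
    ∃ l, l.length = m ∧ G.IsLinkage A B (2 * L + 1) l := by
  induction m with
  | zero => exact ⟨[], rfl, by simp [IsLinkage]⟩
  | succ m ih =>
    classical
    obtain ⟨l, rfl, hl⟩ := ih fun k hk => hm k (by omega)
    have hX : Disjoint (internalVerts (A ∪ B) l) (A ∪ B) := Set.disjoint_left.mpr fun _ hx => hx.1
    have hXcard := ncard_internalVerts_le hAB fun P hP =>
      ⟨(hl.1 P hP).1, (hl.1 P hP).2.1, (hl.1 P hP).2.2.1⟩
    have hsmall : ((d * (∑ i ∈ range L, d ^ i) * (internalVerts (A ∪ B) l).ncard : ℕ) : ℝ) <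
        c₁ * A.ncard :=
      lt_of_le_of_lt (by gcongr) (hm l.length (by omega))
    obtain ⟨a, ha, b, hb, p, hp, hpX⟩ := hexp.exists_walk_avoiding hdeg hclose hle hX hsmall
    exact ⟨_, rfl, hl.cons ha hb (p.length_bypass_le_length.trans hp) p.bypass_isPath
      fun x hx => hpX x (p.support_bypass_subset_support hx)⟩

end SimpleGraph

theorem stmt15 {V : Type*} [Fintype V] (G : SimpleGraph V) [DecidableRel G.Adj]
    (n d : ℕ) (hn : n = Fintype.card V) (hreg : G.IsRegularOfDegree d)
    (c₁ : ℝ) (hc₁ : 0 < c₁)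
    (hexp : ∀ U : Set V, (U.ncard : ℝ) ≤ n / 2 →
      c₁ * U.ncard ≤ ((G.edgesBetween U Uᶜ).ncard : ℝ))
    (L : ℕ) (W : Set V)
    (hclose : ∀ v : V, ∃ w ∈ W, ∃ p : G.Walk v w, p.length ≤ L)
    (A B : Set V) (hAB : A ∪ B = W) (hABdisj : Disjoint A B)
    (hle : A.ncard ≤ B.ncard) :
    ∃ k : ℕ, c₁ * A.ncard / (d : ℝ) ^ (2 * L + 1) ≤ k ∧
      ∃ P : Fin k → Σ u : V, Σ v : V, G.Walk u v,
        (∀ i, (P i).1 ∈ A) ∧ (∀ i, (P i).2.1 ∈ B) ∧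
        (∀ i, (P i).2.2.length ≤ 2 * L + 1) ∧
        (∀ i, (P i).2.2.IsPath) ∧
        (∀ i j, i ≠ j → ∀ x, x ∈ (P i).2.2.support → x ∈ (P j).2.2.support →
          x ∈ A ∪ B) := by
  subst hn hAB
  replace hexp : G.IsEdgeExpander c₁ := hexp
  have hdeg : ∀ v, G.degree v ≤ d := fun v => (hreg v).le
  have hd1 : d = 1 → c₁ * A.ncard ≤ 1 := by
    rintro rfl
    exact hexp.mul_ncard_le_one_of_isRegularOfDegree_one hc₁ hreg hABdisj hle
  obtain ⟨K, hK, hKsmall⟩ := exists_nat_div_pow_le_and_forall_lt L hd1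
  obtain ⟨l, rfl, hl⟩ := hexp.exists_isLinkage hdeg hclose hABdisj hle K hKsmall
  exact ⟨l.length, hK, l.get, hl.get⟩
end
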